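/- arXiv:1904.00215 — 5 statements merged into one kernel-verified Lean document; each statement's English description precedes it below -/
import Mathlib

section
/- There do not exist positive integers X, Y, Z such that X^4 + 4*Y^4 = Z^2. -/
/-!
Infinite descent on `z`. Dividing by `gcd x y` we may assume `x, y` coprime. If `x` is even, so is
`z`, and `(y, x / 2, z / 2)` is a smaller solution. If `x` is odd, `(x², 2y², z)` is a primitive
Pythagorean triple, so `y² = mn` with `m = p²`, `n = q²` coprime, and `x² + q⁴ = p⁴`. The primitive
triple `(x, q², p²)` gives `q² = 2ab` and `p² = a² + b²` with `a, b` coprime; if `a = 2c²`, `b = d²`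
(or the other way round), then `d⁴ + 4c⁴ = p²` with `p < z`.
-/

theorem Int.exists_pos_sq_of_gcd_eq_one {a b c : ℤ} (hab : Int.gcd a b = 1) (ha : 0 < a)
    (h : a * b = c ^ 2) : ∃ s, 0 < s ∧ a = s ^ 2 := by
  obtain ⟨s, hs | hs⟩ := Int.sq_of_gcd_eq_one hab h
  · refine ⟨|s|, abs_pos.2 ?_, by rw [sq_abs, hs]⟩
    rintro rfl
    simp_all
  · nlinarith [sq_nonneg s]

namespace FermatX4Add4Y4

theorem exists_coprime_solution {x y z : ℤ} (hx : 0 < x) (hy : 0 < y) (hz : 0 < z)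
    (h : x ^ 4 + 4 * y ^ 4 = z ^ 2) :
    ∃ x' y' z', 0 < x' ∧ 0 < y' ∧ 0 < z' ∧ z' ≤ z ∧ Int.gcd x' y' = 1 ∧
      x' ^ 4 + 4 * y' ^ 4 = z' ^ 2 := by
  obtain ⟨g, x', y', hg, hxy', rfl, rfl⟩ :=
    Int.exists_gcd_one' (Int.gcd_pos_of_ne_zero_left y hx.ne')
  have hg' : (0 : ℤ) < g := by exact_mod_cast hg
  obtain ⟨z', rfl⟩ : (g : ℤ) ^ 2 ∣ z := by
    rw [← Int.pow_dvd_pow_iff two_ne_zero]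
    exact ⟨x' ^ 4 + 4 * y' ^ 4, by rw [← h]; ring⟩
  have hz' : 0 < z' := pos_of_mul_pos_right hz (by positivity)
  refine ⟨x', y', z', pos_of_mul_pos_left hx hg'.le, pos_of_mul_pos_left hy hg'.le, hz',
    le_mul_of_one_le_left hz'.le (one_le_pow₀ hg'), hxy', ?_⟩
  have hg4 : (g : ℤ) ^ 4 ≠ 0 := by positivity
  exact mul_left_cancel₀ hg4 (by linear_combination h)

theorem exists_smaller_solution_of_even {x y z : ℤ} (hx : 0 < x) (hy : 0 < y) (hz : 0 < z)
    (hxe : Even x) (h : x ^ 4 + 4 * y ^ 4 = z ^ 2) :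
    ∃ x' y' z', 0 < x' ∧ 0 < y' ∧ 0 < z' ∧ z' < z ∧ x' ^ 4 + 4 * y' ^ 4 = z' ^ 2 := by
  obtain ⟨u, rfl⟩ := hxe
  obtain ⟨w, rfl⟩ : Even z :=
    (Int.even_pow.mp (show Even (z ^ 2) from ⟨8 * u ^ 4 + 2 * y ^ 4, by linear_combination -h⟩)).1
  exact ⟨y, u, w, hy, by linarith, by linarith, by linarith, by linarith⟩

theorem exists_sq_add_fourth_power_eq_of_odd {x y z : ℤ} (hy : 0 < y) (hz : 0 < z)
    (hxy : Int.gcd x y = 1) (hxo : Odd x) (h : x ^ 4 + 4 * y ^ 4 = z ^ 2) :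
    ∃ p q, 0 < p ∧ 0 < q ∧ p < z ∧ Int.gcd x q = 1 ∧ x ^ 2 + (q ^ 2) ^ 2 = (p ^ 2) ^ 2 := by
  have hcop : Int.gcd (x ^ 2) (2 * y ^ 2) = 1 := by
    rw [← Int.isCoprime_iff_gcd_eq_one] at hxy ⊢
    exact (Int.isCoprime_two_right.2 hxo).pow_left.mul_right hxy.pow
  have ht : PythagoreanTriple (x ^ 2) (2 * y ^ 2) z := by
    unfold PythagoreanTriple; linear_combination h
  obtain ⟨m, n, hx2, hy2, rfl, hmn, -, hm0⟩ :=
    ht.coprime_classification' hcop (Int.odd_iff.mp hxo.pow) hz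
  have hmn_pos : 0 < m * n := by nlinarith
  have hm : 0 < m := lt_of_le_of_ne hm0 (by rintro rfl; simp at hmn_pos)
  have hn : 0 < n := pos_of_mul_pos_right hmn_pos hm.le
  obtain ⟨p, hp, rfl⟩ := Int.exists_pos_sq_of_gcd_eq_one hmn hm (c := y) (by linarith)
  obtain ⟨q, hq, rfl⟩ :=
    Int.exists_pos_sq_of_gcd_eq_one (c := y) (by rwa [Int.gcd_comm]) hn (by linarith)
  have hpq : p * q = y := (sq_eq_sq₀ (by positivity) hy.le).1 (by linarith)
  refine ⟨p, q, hp, hq, ?_, ?_, by linear_combination hx2⟩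
  · nlinarith [pow_pos hq 4, le_self_pow₀ (show 1 ≤ p by omega) (show 4 ≠ 0 by norm_num)]
  · have hqy : q ∣ y := ⟨p, by rw [← hpq, mul_comm]⟩
    exact Nat.eq_one_of_dvd_one (hxy ▸ Int.gcd_dvd_gcd_of_dvd_right x hqy)

theorem exists_solution_of_sq_eq_two_mul {A B p q : ℤ} (hA : 0 < A) (hB : 0 < B)
    (hAB : Int.gcd A B = 1) (hAe : Even A) (hq : q ^ 2 = 2 * A * B) (hp : p ^ 2 = A ^ 2 + B ^ 2) :
    ∃ c d, 0 < c ∧ 0 < d ∧ d ^ 4 + 4 * c ^ 4 = p ^ 2 := by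
  obtain ⟨a, rfl⟩ := hAe
  obtain ⟨r, rfl⟩ : Even q :=
    (Int.even_pow.mp (show Even (q ^ 2) from ⟨2 * a * B, by linear_combination hq⟩)).1
  have haB : Int.gcd a B = 1 :=
    Nat.eq_one_of_dvd_one (hAB ▸ Int.gcd_dvd_gcd_of_dvd_left B ⟨2, by ring⟩)
  obtain ⟨c, hc, rfl⟩ := Int.exists_pos_sq_of_gcd_eq_one haB (by linarith) (c := r) (by linarith)
  obtain ⟨d, hd, rfl⟩ := Int.exists_pos_sq_of_gcd_eq_one (c := r) (by rwa [Int.gcd_comm]) hB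
    (by linarith)
  exact ⟨c, d, hc, hd, by linear_combination -hp⟩

theorem exists_solution_of_sq_add_fourth_power_eq {x p q : ℤ} (hp : 0 < p) (hq : 0 < q)
    (hxq : Int.gcd x q = 1) (hxo : Odd x) (h : x ^ 2 + (q ^ 2) ^ 2 = (p ^ 2) ^ 2) :
    ∃ c d, 0 < c ∧ 0 < d ∧ d ^ 4 + 4 * c ^ 4 = p ^ 2 := by
  have hcop : Int.gcd x (q ^ 2) = 1 := by
    rw [← Int.isCoprime_iff_gcd_eq_one] at hxq ⊢
    exact hxq.pow_right
  have ht : PythagoreanTriple x (q ^ 2) (p ^ 2) := by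
    unfold PythagoreanTriple; linear_combination h
  obtain ⟨a, b, -, hq2, hp2, hab, hpar, ha0⟩ :=
    ht.coprime_classification' hcop (Int.odd_iff.mp hxo) (by positivity)
  have hab_pos : 0 < a * b := by nlinarith [pow_pos hq 2]
  have ha : 0 < a := lt_of_le_of_ne ha0 (by rintro rfl; simp at hab_pos)
  have hb : 0 < b := pos_of_mul_pos_right hab_pos ha.le
  rcases hpar with ⟨hae, -⟩ | ⟨-, hbe⟩
  · exact exists_solution_of_sq_eq_two_mul ha hb hab (Int.even_iff.2 hae) hq2 hp2
  · exact exists_solution_of_sq_eq_two_mul (p := p) (q := q) hb ha (by rwa [Int.gcd_comm])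
      (Int.even_iff.2 hbe) (by linear_combination hq2) (by linear_combination hp2)

theorem exists_smaller_solution {x y z : ℤ} (hx : 0 < x) (hy : 0 < y) (hz : 0 < z)
    (h : x ^ 4 + 4 * y ^ 4 = z ^ 2) :
    ∃ x' y' z', 0 < x' ∧ 0 < y' ∧ 0 < z' ∧ z' < z ∧ x' ^ 4 + 4 * y' ^ 4 = z' ^ 2 := by
  obtain ⟨x, y, w, hx, hy, hw, hwz, hxy, h⟩ := exists_coprime_solution hx hy hz h
  rcases Int.even_or_odd x with hxe | hxo
  · obtain ⟨x', y', z', hx', hy', hz', hz'w, h'⟩ := exists_smaller_solution_of_even hx hy hw hxe h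
    exact ⟨x', y', z', hx', hy', hz', hz'w.trans_le hwz, h'⟩
  · obtain ⟨p, q, hp, hq, hpw, hxq, hpq⟩ := exists_sq_add_fourth_power_eq_of_odd hy hw hxy hxo h
    obtain ⟨c, d, hc, hd, hcd⟩ := exists_solution_of_sq_add_fourth_power_eq hp hq hxq hxo hpq
    exact ⟨d, c, p, hd, hc, hp, hpw.trans_le hwz, hcd⟩

end FermatX4Add4Y4

/-- There do not exist positive integers `X, Y, Z` such that `X^4 + 4*Y^4 = Z^2`. -/
theorem no_pos_int_sol_x4_add_4y4_eq_z2 :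
    ¬ ∃ X Y Z : ℤ, 0 < X ∧ 0 < Y ∧ 0 < Z ∧ X ^ 4 + 4 * Y ^ 4 = Z ^ 2 := by
  rintro ⟨X, Y, Z, hX, hY, hZ, h⟩
  lift Z to ℕ using hZ.le
  induction Z using Nat.strong_induction_on generalizing X Y with
  | _ n ih =>
    obtain ⟨x, y, z, hx, hy, hz, hzn, h'⟩ := FermatX4Add4Y4.exists_smaller_solution hX hY hZ h
    lift z to ℕ using hz.le
    exact ih z (by exact_mod_cast hzn) x y hx hy hz h'
end

section
/- Let p be a prime with p ≡ 3 (mod 32). Then the polynomial X^2 - (1+τ+τ^2)((1+τ+τ^2)^2 + p)((1+τ+τ^2)^2 + 2p) has a root in ℚ₂(√2); equivalently, f(1+√2+2) is a square in ℚ₂(√2), where f(x) = x(x^2+p)(x^2+2p) and √2 denotes a square root of 2 in ℚ₂(√2). -/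
/-!
With `τ = √2` we have `t = 3 + τ` and `f(t) = 2a + 4bτ` for integers `a ≡ 3 (mod 8)` and `b` odd.
If `z` is a unit with `2z⁴ - az² + b² = 0`, then `(2z + b z⁻¹ τ)² = 2a + 4bτ`. Such a `z` exists in
`ℤ₂` by Hensel's lemma: at `z = 1` the quartic takes the value `2 - a + b² ≡ 0 (mod 8)`, while its
derivative `8 - 2a` has valuation exactly `1`.
-/

open Polynomial

theorem AdjoinRoot.root_X_pow_two_sub_C_sq {R : Type*} [CommRing R] (d : R) :
    root (X ^ 2 - C d) ^ 2 = of (X ^ 2 - C d) d := by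
  have h := eval₂_root (X ^ 2 - C d)
  rwa [eval₂_sub, eval₂_pow, eval₂_X, eval₂_C, sub_eq_zero] at h

theorem isSquare_two_mul_add_four_mul {K : Type*} [CommRing K] {τ a b z : K} (hτ : τ ^ 2 = 2)
    (hz : IsUnit z) (h : 2 * z ^ 4 - a * z ^ 2 + b ^ 2 = 0) : IsSquare (2 * a + 4 * b * τ) := by
  obtain ⟨w, hw⟩ := hz.exists_right_inv
  refine ⟨2 * z + b * w * τ, ?_⟩
  linear_combination (-2 * w ^ 2) * h + (-4 * b * τ + (4 * z ^ 2 - 2 * a) * (1 + z * w)) * hw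
    - b ^ 2 * w ^ 2 * hτ

theorem PadicInt.norm_intCast_of_odd {n : ℤ} (hn : Odd n) : ‖(n : ℤ_[2])‖ = 1 :=
  PadicInt.norm_intCast_eq_one_iff.mpr (Int.isCoprime_two_right.mpr hn)

theorem PadicInt.exists_isUnit_two_mul_pow_four_sub_mul_sq_add_sq_eq_zero {a b : ℤ}
    (ha : a ≡ 3 [ZMOD 8]) (hb : Odd b) :
    ∃ z : ℤ_[2], IsUnit z ∧ 2 * z ^ 4 - a * z ^ 2 + b ^ 2 = 0 := by
  obtain ⟨c, hc⟩ := ha.dvd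
  set G : ℤ[X] := C 2 * X ^ 4 - C a * X ^ 2 + C (b ^ 2)
  have hG : ‖aeval (1 : ℤ_[2]) G‖ ≤ 2 ^ (-3 : ℤ) := by
    have h8 : ((2 : ℕ) ^ 3 : ℤ) ∣ 2 - a + b ^ 2 := by
      obtain ⟨d, hd⟩ := Int.eight_dvd_sq_sub_one_of_odd hb
      exact ⟨c + d, by push_cast; linear_combination hc + hd⟩
    simpa [G, map_ofNat] using norm_int_le_pow_iff_dvd.mpr h8
  have hG' : ‖aeval (1 : ℤ_[2]) (derivative G)‖ = 2⁻¹ := by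
    have h4a : Odd (4 - a) := ⟨4 * c, by linear_combination hc⟩
    have hG'_eq : aeval (1 : ℤ_[2]) (derivative G) = 2 * ((4 - a : ℤ) : ℤ_[2]) := by
      simp [G, derivative_pow, map_ofNat]; ring
    rw [hG'_eq, norm_mul, norm_intCast_of_odd h4a]
    simpa using norm_p (p := 2)
  obtain ⟨z, hz, hdist, -, -⟩ := hensels_lemma (F := G) (a := 1) (by
    rw [hG']; refine hG.trans_lt ?_; norm_num)
  refine ⟨z, isUnit_iff.mpr ?_, by simpa [G, map_ofNat] using hz⟩
  have hz1 : ‖z - 1‖ < ‖(1 : ℤ_[2])‖ := by rw [norm_one]; linarith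
  have h := IsUltrametricDist.norm_add_eq_max_of_norm_ne_norm hz1.ne
  rwa [sub_add_cancel, max_eq_right hz1.le, norm_one] at h

theorem f_one_add_sqrt_two_isSquare_general (p : ℕ) (hmod : p % 32 = 3) :
    ∀ t : AdjoinRoot ((X : Polynomial ℚ_[2]) ^ 2 - C 2),
      t = 1 + AdjoinRoot.root ((X : Polynomial ℚ_[2]) ^ 2 - C 2) +
          AdjoinRoot.root ((X : Polynomial ℚ_[2]) ^ 2 - C 2) ^ 2 →
      IsSquare (t * (t ^ 2 + (p : AdjoinRoot ((X : Polynomial ℚ_[2]) ^ 2 - C 2))) *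
        (t ^ 2 + 2 * (p : AdjoinRoot ((X : Polynomial ℚ_[2]) ^ 2 - C 2)))) := by
  intro t ht
  obtain ⟨k, rfl⟩ : ∃ k, p = 32 * k + 3 := ⟨p / 32, by omega⟩
  set τ := AdjoinRoot.root ((X : Polynomial ℚ_[2]) ^ 2 - C 2)
  have hτ : τ ^ 2 = 2 := by rw [AdjoinRoot.root_X_pow_two_sub_C_sq]; exact map_ofNat _ 2
  have ht3 : t = 3 + τ := by rw [ht, hτ]; ring
  have ht2 : t ^ 2 = 11 + 6 * τ := by rw [ht3]; linear_combination hτ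
  -- `f(3 + τ) = (843 + 135p + 6p²) + (589 + 87p + 2p²)τ`, halved and quartered at `p = 32k + 3`
  obtain ⟨z, hz, hroot⟩ := PadicInt.exists_isUnit_two_mul_pow_four_sub_mul_sq_add_sq_eq_zero
    (a := 651 + 2736 * k + 3072 * k ^ 2) (b := 217 + 792 * k + 512 * k ^ 2)
    (Int.modEq_iff_dvd.mpr ⟨-(81 + 342 * k + 384 * k ^ 2), by ring⟩)
    ⟨108 + 396 * k + 256 * k ^ 2, by ring⟩
  let φ := algebraMap ℤ_[2] (AdjoinRoot ((X : ℚ_[2][X]) ^ 2 - C 2))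
  have hsq := isSquare_two_mul_add_four_mul hτ (hz.map φ)
    (by simpa [map_ofNat] using congrArg φ hroot)
  convert hsq using 1
  rw [ht2, ht3]
  push_cast
  linear_combination (36 * τ + 240 + 18 * (32 * k + 3)) * hτ

/-- For a prime `p ≡ 3 (mod 32)`, the element `f(1+τ+τ²)` is a square in
`ℚ₂(√2) = ℚ₂[τ]/(τ² - 2)`, where `f(x) = x(x²+p)(x²+2p)`. -/
theorem f_one_add_sqrt_two_isSquare (p : ℕ) (hp : p.Prime) (hmod : p % 32 = 3) :
    ∀ t : AdjoinRoot ((X : Polynomial ℚ_[2]) ^ 2 - C 2),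
      t = 1 + AdjoinRoot.root ((X : Polynomial ℚ_[2]) ^ 2 - C 2) +
          AdjoinRoot.root ((X : Polynomial ℚ_[2]) ^ 2 - C 2) ^ 2 →
      IsSquare (t * (t ^ 2 + (p : AdjoinRoot ((X : Polynomial ℚ_[2]) ^ 2 - C 2))) *
        (t ^ 2 + 2 * (p : AdjoinRoot ((X : Polynomial ℚ_[2]) ^ 2 - C 2)))) :=
  f_one_add_sqrt_two_isSquare_general p hmod
end

section
/- Let k be a field of characteristic 0, and let a, b, c ∈ k[x] be pairwise coprime polynomials, not all constant, with a + b = c. Then deg(c) < n₀(abc), where n₀(abc) denotes the number of distinct roots of the product abc in an algebraic closure of k. -/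
/-!
Mathlib's `Polynomial.abc` (the Wronskian argument) bounds `deg c` strictly by `deg (rad (a b c))`
unless `a`, `b`, `c` all have zero derivative, which in characteristic 0 means they are constant.
Over a perfect field `rad (a b c)` is squarefree, hence separable, so its degree is the number of
its distinct roots in a splitting field, and these are roots of `a b c`.
-/

open Polynomial UniqueFactorizationMonoid
open scoped Classical

namespace Polynomial

theorem natDegree_radical_le_card_roots_toFinset_map {F K : Type*} [Field F] [DecidableEq F]
    [PerfectField F] [Field K] [DecidableEq K] {φ : F →+* K} {f : F[X]}
    (hsplit : (f.map φ).Splits) :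
    (radical f).natDegree ≤ (f.map φ).roots.toFinset.card := by
  rcases eq_or_ne f 0 with rfl | hf
  · simp
  have hsep : (radical f).Separable := PerfectField.separable_iff_squarefree.2 squarefree_radical
  have hdvd : (radical f).map φ ∣ f.map φ := Polynomial.map_dvd φ radical_dvd_self
  have hfφ : f.map φ ≠ 0 := map_ne_zero hf
  calc (radical f).natDegree = ((radical f).map φ).roots.card := by
        rw [← natDegree_map φ, (hsplit.of_dvd hfφ hdvd).natDegree_eq_card_roots]
    _ = ((radical f).map φ).roots.toFinset.card :=
        (Multiset.toFinset_card_of_nodup (nodup_roots hsep.map)).symm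
    _ ≤ (f.map φ).roots.toFinset.card :=
        Finset.card_le_card <| Multiset.toFinset_subset.2 <|
          Multiset.subset_of_le (roots.le_of_dvd hfφ hdvd)

theorem natDegree_eq_zero_of_isCoprime_of_add_eq_of_mul_eq_zero {R : Type*} [CommRing R]
    [IsDomain R] {a b c : R[X]} (hab : IsCoprime a b) (habc : a + b = c) (h : a * b * c = 0) :
    a.natDegree = 0 ∧ b.natDegree = 0 ∧ c.natDegree = 0 := by
  subst habc
  rcases mul_eq_zero.1 h with h | h
  · rcases mul_eq_zero.1 h with rfl | rfl
    · simp [natDegree_eq_zero_of_isUnit (isCoprime_zero_left.1 hab)]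
    · simp [natDegree_eq_zero_of_isUnit (isCoprime_zero_right.1 hab)]
  · obtain rfl : b = -a := eq_neg_of_add_eq_zero_right h
    have ha := natDegree_eq_zero_of_isUnit (isCoprime_self.1 ((IsCoprime.neg_right_iff a a).1 hab))
    simp [ha]

theorem natDegree_lt_natDegree_radical_of_add_eq {k : Type*} [Field k] [DecidableEq k] [CharZero k]
    {a b c : k[X]} (hab : IsCoprime a b) (habc : a + b = c)
    (hnc : ¬ (a.natDegree = 0 ∧ b.natDegree = 0 ∧ c.natDegree = 0)) :
    c.natDegree < (radical (a * b * c)).natDegree := by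
  have h0 : a * b * c ≠ 0 :=
    fun h ↦ hnc (natDegree_eq_zero_of_isCoprime_of_add_eq_of_mul_eq_zero hab habc h)
  simp only [mul_ne_zero_iff] at h0
  obtain ⟨⟨ha, hb⟩, hc⟩ := h0
  rcases Polynomial.abc ha hb (neg_ne_zero.2 hc) hab (by rw [habc, add_neg_cancel]) with
    ⟨-, -, h⟩ | ⟨ha', hb', hc'⟩
  · rwa [natDegree_neg, mul_neg, UniqueFactorizationDomain.radical_neg] at h
  · exact absurd ⟨derivative_eq_zero.1 ha', derivative_eq_zero.1 hb',
      natDegree_neg c ▸ derivative_eq_zero.1 hc'⟩ hnc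

end Polynomial

theorem polynomial_abc_general (k : Type*) [Field k] [CharZero k]
    (a b c : Polynomial k) (hab : IsCoprime a b)
    (hnc : ¬ (a.natDegree = 0 ∧ b.natDegree = 0 ∧ c.natDegree = 0))
    (habc : a + b = c) :
    c.natDegree <
      (((a * b * c).map (algebraMap k (AlgebraicClosure k))).roots.toFinset.card) :=
  (natDegree_lt_natDegree_radical_of_add_eq hab habc hnc).trans_le
    (natDegree_radical_le_card_roots_toFinset_map (IsAlgClosed.splits _))

/-- Mason–Stothers (abc for polynomials): if `a, b, c ∈ k[x]` (char k = 0) are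
pairwise coprime, not all constant, and `a + b = c`, then
`deg c < n₀(abc)`, the number of distinct roots of `abc` in an algebraic closure. -/
theorem polynomial_abc (k : Type*) [Field k] [CharZero k]
    (a b c : Polynomial k) (hab : IsCoprime a b) (hbc : IsCoprime b c)
    (hac : IsCoprime a c)
    (hnc : ¬ (a.natDegree = 0 ∧ b.natDegree = 0 ∧ c.natDegree = 0))
    (habc : a + b = c) :
    c.natDegree <
      (((a * b * c).map (algebraMap k (AlgebraicClosure k))).roots.toFinset.card) :=
  polynomial_abc_general k a b c hab hnc habc
end

section
/- Let i, j be nonnegative integers. The only points of the hyperelliptic curve y² = x(x² + 2ⁱtʲ)(x² + 2^{i+1}tʲ) defined over the rational function field ℚ(t) are the point (0,0) and the point at infinity. Equivalently, if X, Y, Z ∈ ℚ[t] are coprime polynomials (with appropriate weights) satisfying Y² = XZ(X² + 2ⁱtʲZ²)(X² + 2^{i+1}tʲZ²), then Y = 0 and XZ(X²+2ⁱtʲZ²)(X²+2^{i+1}tʲZ²) = 0. -/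
open Polynomial

/-!
Evaluating at `t = 2^k` for all `k`, it suffices that `x(x² + 2^m)(x² + 2^{m+1})` is never a
nonzero square in `ℚ`. For `x = P/S` in lowest terms, the odd parts of `P`, `S`, `P² + 2^m S²` and
`P² + 2^{m+1} S²` are pairwise coprime, so each of them is a square. Comparing the 2-adic
valuations of `P²` and `2^m S²` leaves either `u⁴ + 2^d σ⁴ = □` and `u⁴ + 2^{d+1} σ⁴ = □` with
`d ≥ 1`, or `u⁴ + σ⁴ = 2□` and `u⁴ + 2σ⁴ = □`. Elementary substitutions turn each such pair into a
rational point with `b c ≠ 0` on `a⁴ + b⁴ = c²` (Fermat, `not_fermat_42`) or on `a⁴ - b⁴ = c²`,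
which is excluded by Fermat's descent through primitive Pythagorean triples.
-/

theorem Int.exists_sq_of_isCoprime_of_nonneg {a b c : ℤ} (hab : IsCoprime a b)
    (h : a * b = c ^ 2) (ha : 0 ≤ a) : ∃ x, 0 ≤ x ∧ a = x ^ 2 := by
  obtain ⟨x, hx | hx⟩ := Int.sq_of_isCoprime hab h
  · exact ⟨|x|, abs_nonneg x, by rw [sq_abs, hx]⟩
  · exact ⟨0, le_rfl, by nlinarith [sq_nonneg x]⟩

def Fermat42Sub (a b c : ℤ) : Prop :=
  IsCoprime a b ∧ 0 < a ∧ b ≠ 0 ∧ c ≠ 0 ∧ a ^ 4 = b ^ 4 + c ^ 2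

theorem exists_sq_add_sq_eq_of_mul_eq_two_mul_sq {m n k : ℤ} (hmn : IsCoprime m n) (hm : 0 ≤ m)
    (hn : 0 ≤ n) (hk : m * n = 2 * k ^ 2) (hk0 : k ≠ 0) :
    ∃ s t, Odd t ∧ IsCoprime t s ∧ s ≠ 0 ∧ m ^ 2 + n ^ 2 = t ^ 4 + 4 * s ^ 4 := by
  wlog hm2 : Even m generalizing m n
  · have hn2 : Even n := (Int.even_mul.mp ⟨k ^ 2, by rw [hk]; ring⟩).resolve_left hm2
    obtain ⟨s, t, h⟩ := this hmn.symm hn hm (by rw [mul_comm, hk]) hn2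
    exact ⟨s, t, by rw [add_comm]; exact h⟩
  obtain ⟨m', rfl⟩ := hm2
  have hn_odd : Odd n := by
    by_contra hn2
    rw [Int.not_odd_iff_even] at hn2
    have := Int.isUnit_iff.mp (hmn.isUnit_of_dvd' ⟨m', by ring⟩ hn2.two_dvd)
    omega
  have hcop : IsCoprime m' n := hmn.of_isCoprime_of_dvd_left ⟨2, by ring⟩
  have hk' : m' * n = k ^ 2 := by linarith
  obtain ⟨s, -, rfl⟩ := Int.exists_sq_of_isCoprime_of_nonneg hcop hk' (by linarith)
  obtain ⟨t, -, rfl⟩ := Int.exists_sq_of_isCoprime_of_nonneg hcop.symm (by rw [mul_comm, hk']) hn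
  refine ⟨s, t, (Int.odd_pow' two_ne_zero).mp hn_odd,
    (IsCoprime.pow_iff two_pos two_pos).mp hcop.symm, ?_, by ring⟩
  rintro rfl
  exact hk0 (pow_eq_zero_iff two_ne_zero |>.mp (by rw [← hk']; ring))

theorem exists_fermat42Sub_lt_of_sq_eq {a s t : ℤ} (ha : 0 < a) (ht : Odd t) (hts : IsCoprime t s)
    (hs : s ≠ 0) (h : a ^ 2 = t ^ 4 + 4 * s ^ 4) :
    ∃ g h, Fermat42Sub g h t ∧ g < a := by
  have hcop : IsCoprime (t ^ 2) (2 * s ^ 2) :=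
    (Int.isCoprime_two_right.mpr ht).pow_left.mul_right (hts.pow)
  obtain ⟨p, q, ht2, hs2, ha2, hpq, -, hp⟩ := PythagoreanTriple.coprime_classification'
    (x := t ^ 2) (y := 2 * s ^ 2) (z := a) (by unfold PythagoreanTriple; linear_combination -h)
    (Int.isCoprime_iff_gcd_eq_one.mp hcop) (Int.odd_iff.mp ht.pow) ha
  have hpq' : p * q = s ^ 2 := by linarith
  have hs_pos : 0 < s ^ 2 := by positivity
  have hp0 : 0 < p := lt_of_le_of_ne hp (by rintro rfl; simp at hpq'; linarith)
  have hq0 : 0 < q := pos_of_mul_pos_right (hpq' ▸ hs_pos) hp0.le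
  have hcop' := Int.isCoprime_iff_gcd_eq_one.mpr hpq
  obtain ⟨g, hg, rfl⟩ := Int.exists_sq_of_isCoprime_of_nonneg hcop' hpq' hp0.le
  obtain ⟨h, -, rfl⟩ :=
    Int.exists_sq_of_isCoprime_of_nonneg hcop'.symm (by rw [mul_comm, hpq']) hq0.le
  refine ⟨g, h, ⟨(IsCoprime.pow_iff two_pos two_pos).mp hcop', ?_, ?_, ?_, ?_⟩, ?_⟩
  · exact lt_of_le_of_ne hg (by rintro rfl; simp at hp0)
  · rintro rfl; simp at hq0
  · rintro rfl; simp at ht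
  · linear_combination -ht2
  · nlinarith

namespace Fermat42Sub

variable {a b c : ℤ}

theorem odd_left (h : Fermat42Sub a b c) : Odd a := by
  obtain ⟨hab, -, -, -, heq⟩ := h
  by_contra ha
  rw [Int.not_odd_iff_even] at ha
  have hb : Odd b := by
    by_contra hb
    rw [Int.not_odd_iff_even] at hb
    have := Int.isUnit_iff.mp (hab.isUnit_of_dvd' ha.two_dvd hb.two_dvd)
    omega
  obtain ⟨k, rfl⟩ := ha
  have h1 : (k + k) ^ 4 % 4 = 0 := by
    rw [show (k + k) ^ 4 = 4 * (4 * k ^ 4) by ring]; simp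
  have h2 : b ^ 4 % 4 = 1 := by
    rw [show b ^ 4 = (b ^ 2) ^ 2 by ring]; exact Int.sq_mod_four_eq_one_of_odd hb.pow
  have h3 : c ^ 2 % 4 = 0 ∨ c ^ 2 % 4 = 1 := by
    rcases Int.even_or_odd c with ⟨l, rfl⟩ | hc
    · left; rw [show (l + l) ^ 2 = 4 * l ^ 2 by ring]; simp
    · exact Or.inr (Int.sq_mod_four_eq_one_of_odd hc)
  omega

theorem isCoprime_sq_left (h : Fermat42Sub a b c) : IsCoprime (b ^ 2) c := by
  obtain ⟨hab, -, -, -, heq⟩ := h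
  obtain ⟨u, v, huv⟩ := hab.pow (m := 4) (n := 4)
  have : IsCoprime (b ^ 4) (c ^ 2) := ⟨u + v, u, by linear_combination -u * heq + huv⟩
  exact (this.of_isCoprime_of_dvd_left (pow_dvd_pow b (by norm_num))).of_isCoprime_of_dvd_right
    (dvd_pow_self c two_ne_zero)

theorem exists_lt_of_odd (h : Fermat42Sub a b c) (hb : Odd b) :
    ∃ a' b' c', Fermat42Sub a' b' c' ∧ a' < a := by
  have hcop := h.isCoprime_sq_left
  obtain ⟨-, ha, hb0, hc0, heq⟩ := h
  obtain ⟨m, n, hb2, hc, ha2, hmn, -, hm⟩ := PythagoreanTriple.coprime_classification'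
    (x := b ^ 2) (y := c) (z := a ^ 2) (by unfold PythagoreanTriple; linear_combination -heq)
    (Int.isCoprime_iff_gcd_eq_one.mp hcop) (Int.odd_iff.mp hb.pow) (by positivity)
  have hm0 : m ≠ 0 := by rintro rfl; simp at hc; exact hc0 hc
  have hn0 : n ≠ 0 := by rintro rfl; simp at hc; exact hc0 hc
  have hm_lt : m < a := by
    have : 0 < n ^ 2 := by positivity
    nlinarith
  refine ⟨m, n, a * b, ⟨Int.isCoprime_iff_gcd_eq_one.mpr hmn, lt_of_le_of_ne hm (Ne.symm hm0),
    hn0, mul_ne_zero ha.ne' hb0, ?_⟩, hm_lt⟩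
  -- `m⁴ - n⁴ = (m² - n²)(m² + n²) = b²a²`
  linear_combination (-(m ^ 2 + n ^ 2)) * hb2 - b ^ 2 * ha2

theorem exists_lt_of_even (h : Fermat42Sub a b c) (hb : Even b) :
    ∃ a' b' c', Fermat42Sub a' b' c' ∧ a' < a := by
  have ha_odd := h.odd_left
  have hcop := h.isCoprime_sq_left
  obtain ⟨-, ha, hb0, hc0, heq⟩ := h
  have hc : Odd c := by
    rw [← Int.odd_pow' two_ne_zero]
    have : c ^ 2 = a ^ 4 - b ^ 4 := by linarith
    rw [this]
    exact (ha_odd.pow).sub_even (hb.pow_of_ne_zero four_ne_zero)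
  obtain ⟨m, n, -, hb2, ha2, hmn, -, hm⟩ := PythagoreanTriple.coprime_classification'
    (x := c) (y := b ^ 2) (z := a ^ 2) (by unfold PythagoreanTriple; linear_combination -heq)
    (Int.isCoprime_iff_gcd_eq_one.mp hcop.symm) (Int.odd_iff.mp hc) (by positivity)
  -- `b² = 2mn` makes `m, n` a square and twice a square, so `a² = t⁴ + 4s⁴`, and the primitive
  -- triple `(t², 2s², a)` then yields the smaller solution
  obtain ⟨k, rfl⟩ := hb
  have hk0 : k ≠ 0 := by rintro rfl; simp at hb0
  have hmn_k : m * n = 2 * k ^ 2 := by linarith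
  have hn : 0 ≤ n := by
    have : 0 < m * n := by rw [hmn_k]; positivity
    exact (pos_of_mul_pos_right this hm).le
  obtain ⟨s, t, ht, hts, hs, hst⟩ := exists_sq_add_sq_eq_of_mul_eq_two_mul_sq
    (Int.isCoprime_iff_gcd_eq_one.mpr hmn) hm hn hmn_k hk0
  obtain ⟨g, h, hgh, hlt⟩ := exists_fermat42Sub_lt_of_sq_eq ha ht hts hs (by rw [ha2, hst])
  exact ⟨g, h, t, hgh, hlt⟩

theorem exists_lt (h : Fermat42Sub a b c) : ∃ a' b' c', Fermat42Sub a' b' c' ∧ a' < a :=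
  (Int.even_or_odd b).elim h.exists_lt_of_even h.exists_lt_of_odd

end Fermat42Sub

theorem not_fermat42Sub (a b c : ℤ) : ¬Fermat42Sub a b c := by
  induction hn : a.toNat using Nat.strong_induction_on generalizing a b c with
  | _ n ih =>
    intro h
    obtain ⟨a', b', c', h', hlt⟩ := h.exists_lt
    exact ih a'.toNat (by have := h'.2.1; omega) a' b' c' rfl h'

theorem eq_zero_of_sq_eq_mul_sq {n : ℚ} (hn : ¬IsSquare n) {w y : ℚ} (h : w ^ 2 = n * y ^ 2) :
    y = 0 := by
  by_contra hy
  exact hn ⟨w / y, by field_simp; linear_combination -h⟩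

theorem isSquare_of_sq_eq_sq_mul {K : Type*} [Field K] {c t x : K} (ht : t ≠ 0)
    (h : c ^ 2 = t ^ 2 * x) : IsSquare x :=
  ⟨c / t, by field_simp; linear_combination -h⟩

theorem Rat.exists_eq_mul_intCast_natCast (a b : ℚ) (hb : b ≠ 0) :
    ∃ (t : ℚ) (m : ℤ) (n : ℕ), t ≠ 0 ∧ IsCoprime m n ∧ 0 < n ∧ a = t * m ∧ b = t * n := by
  set q := a / b
  refine ⟨b / q.den, q.num, q.den, by positivity, ?_, q.den_pos, ?_, by field_simp⟩
  · rw [Int.isCoprime_iff_gcd_eq_one]; exact q.reduced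
  · rw [div_mul_eq_mul_div, mul_div_assoc, Rat.num_div_den]; simp only [q]; field_simp

theorem Rat.not_fermat_42 {a b c : ℚ} (ha : a ≠ 0) (hb : b ≠ 0) : a ^ 4 + b ^ 4 ≠ c ^ 2 := by
  intro h
  obtain ⟨t, m, n, ht, -, hn, rfl, rfl⟩ := Rat.exists_eq_mul_intCast_natCast a b hb
  obtain ⟨k, hk⟩ : IsSquare (m ^ 4 + (n : ℤ) ^ 4) := by
    rw [← Rat.isSquare_intCast_iff]
    exact isSquare_of_sq_eq_sq_mul (pow_ne_zero 2 ht) (c := c) (by push_cast; linear_combination -h)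
  exact _root_.not_fermat_42 (by rintro rfl; simp at ha) (by omega) (hk.trans (sq k).symm)

theorem Rat.not_fermat_42_sub {a b c : ℚ} (hb : b ≠ 0) (hc : c ≠ 0) : a ^ 4 - b ^ 4 ≠ c ^ 2 := by
  intro h
  have ha : a ≠ 0 := by
    rintro rfl
    have : 0 < c ^ 2 + b ^ 4 := by positivity
    linarith
  obtain ⟨t, m, n, ht, hmn, hn, rfl, rfl⟩ := Rat.exists_eq_mul_intCast_natCast b a ha
  have hN : c ^ 2 = (t ^ 2) ^ 2 * (((n : ℤ) ^ 4 - m ^ 4 : ℤ) : ℚ) := by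
    push_cast; linear_combination -h
  obtain ⟨C, hC⟩ := Rat.isSquare_intCast_iff.mp (isSquare_of_sq_eq_sq_mul (pow_ne_zero 2 ht) hN)
  have hC0 : C ≠ 0 := by
    rintro rfl
    rw [hC, mul_zero, Int.cast_zero, mul_zero] at hN
    exact hc (pow_eq_zero_iff two_ne_zero |>.mp hN)
  exact not_fermat42Sub n m C ⟨hmn.symm, by exact_mod_cast hn, by rintro rfl; simp at hb, hC0,
    by linear_combination hC⟩

theorem eq_zero_of_sq_add_sq_of_sq_add_two_mul_sq {x y z w : ℚ} (h₁ : z ^ 2 = x ^ 2 + y ^ 2)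
    (h₂ : w ^ 2 = x ^ 2 + 2 * y ^ 2) : y = 0 := by
  by_contra hy
  have hx : x ≠ 0 := by
    rintro rfl
    exact hy (eq_zero_of_sq_eq_mul_sq (n := 2) (by norm_num) (w := w) (by linear_combination h₂))
  have hz : z ≠ 0 := by
    rintro rfl
    have : 0 < x ^ 2 + y ^ 2 := by positivity
    linarith
  -- `w⁴ - x⁴ = 4y²(x² + y²) = (2yz)²`
  exact Rat.not_fermat_42_sub (a := w) hx (mul_ne_zero (mul_ne_zero two_ne_zero hy) hz)
    (by linear_combination (w ^ 2 + x ^ 2 + 2 * y ^ 2) * h₂ - 4 * y ^ 2 * h₁)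

theorem eq_zero_of_sq_add_two_mul_sq_of_sq_add_four_mul_sq {x y z w : ℚ}
    (h₁ : z ^ 2 = x ^ 2 + 2 * y ^ 2) (h₂ : w ^ 2 = x ^ 2 + 4 * y ^ 2) : y = 0 := by
  by_contra hy
  -- `α = (w + x)/2` and `β = (w - x)/2` satisfy `αβ = y²` and `α² + β² = z²`, so `α⁴ + y⁴ = (zα)²`
  have hα : (w + x) / 2 ≠ 0 := by
    intro hα
    have : w = -x := by linarith
    rw [this] at h₂
    exact hy (by nlinarith)
  exact Rat.not_fermat_42 hα hy (c := z * ((w + x) / 2)) (by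
    linear_combination (-((w + x) / 2) ^ 2) * h₁ +
      (((w + x) / 2) ^ 2 / 2 - y ^ 2 / 2 - (w ^ 2 - x ^ 2 - 4 * y ^ 2) / 16) * h₂)

theorem eq_zero_of_pow_four_add_two_pow_mul_pow_four {a b v w : ℚ} (d : ℕ)
    (h₁ : v ^ 2 = a ^ 4 + 2 ^ d * b ^ 4) (h₂ : w ^ 2 = a ^ 4 + 2 ^ (d + 1) * b ^ 4) : b = 0 := by
  obtain ⟨c, rfl | rfl⟩ := Nat.even_or_odd' d
  · have := eq_zero_of_sq_add_sq_of_sq_add_two_mul_sq (x := a ^ 2) (y := 2 ^ c * b ^ 2)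
      (by rw [h₁]; ring) (by rw [h₂]; ring)
    simpa using this
  · have := eq_zero_of_sq_add_two_mul_sq_of_sq_add_four_mul_sq (x := a ^ 2) (y := 2 ^ c * b ^ 2)
      (by rw [h₁]; ring) (by rw [h₂]; ring)
    simpa using this

theorem eq_zero_of_pow_four_add_pow_four_of_pow_four_add_two_mul_pow_four {a b v w : ℚ}
    (h₁ : a ^ 4 + b ^ 4 = 2 * v ^ 2) (h₂ : w ^ 2 = a ^ 4 + 2 * b ^ 4) : b = 0 := by
  by_contra hb
  have hb2 : b ^ 2 ≠ 0 := pow_ne_zero 2 hb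
  -- `α = (a² + b²)/2` and `β = (a² - b²)/2` satisfy `α² + β² = v²` and `α² - β² = a²b²`
  rcases eq_or_ne ((a ^ 2 - b ^ 2) / 2) 0 with hβ | hβ
  · exact hb2 (eq_zero_of_sq_eq_mul_sq (n := 3) (by norm_num) (w := w)
      (by linear_combination h₂ + 2 * (a ^ 2 + b ^ 2) * hβ))
  have habv : a * b * v = 0 := by
    by_contra habv
    exact Rat.not_fermat_42_sub (a := (a ^ 2 + b ^ 2) / 2) hβ habv
      (by linear_combination (a ^ 2 * b ^ 2 / 2) * h₁)
  rcases mul_eq_zero.mp habv with hab | rfl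
  · rcases mul_eq_zero.mp hab with rfl | rfl
    · exact hb2 (eq_zero_of_sq_eq_mul_sq (n := 2) (by norm_num) (w := w)
        (by linear_combination h₂))
    · exact hb rfl
  · have : 0 < a ^ 4 + b ^ 4 := by positivity
    linarith

namespace Nat

theorem Coprime.isSquare_mul_iff {a b : ℕ} (hab : a.Coprime b) :
    IsSquare (a * b) ↔ IsSquare a ∧ IsSquare b := by
  refine ⟨fun ⟨c, hc⟩ => ?_, fun ⟨ha, hb⟩ => ha.mul hb⟩
  obtain ⟨u, rfl⟩ := exists_eq_pow_of_mul_eq_pow (Nat.isUnit_iff.mpr hab) (hc.trans (sq c).symm)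
  obtain ⟨v, rfl⟩ := exists_eq_pow_of_mul_eq_pow (Nat.isUnit_iff.mpr hab.symm)
    ((mul_comm _ _).trans (hc.trans (sq c).symm))
  exact ⟨⟨u, sq u⟩, ⟨v, sq v⟩⟩

theorem isSquare_of_isSquare_mul_of_pairwise_coprime {a b c d : ℕ} (hab : a.Coprime b)
    (hac : a.Coprime c) (had : a.Coprime d) (hbc : b.Coprime c) (hbd : b.Coprime d)
    (hcd : c.Coprime d) (h : IsSquare (a * b * c * d)) :
    IsSquare a ∧ IsSquare b ∧ IsSquare c ∧ IsSquare d := by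
  rw [show a * b * c * d = a * b * (c * d) by ring,
    (Coprime.mul_right (hac.mul_left hbc) (had.mul_left hbd)).isSquare_mul_iff,
    hab.isSquare_mul_iff, hcd.isSquare_mul_iff] at h
  exact ⟨h.1.1, h.1.2, h.2.1, h.2.2⟩

theorem isSquare_of_isSquare_two_pow_mul {n : ℕ} (T : ℕ) (hn : Odd n)
    (h : IsSquare (2 ^ T * n)) : IsSquare n :=
  ((coprime_two_left.mpr hn).pow_left T |>.isSquare_mul_iff.mp h).2

theorem Coprime.coprime_sq_add_mul_sq_left {a b k : ℕ} (hab : a.Coprime b) (hak : a.Coprime k) :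
    a.Coprime (a ^ 2 + k * b ^ 2) := by
  rw [show a ^ 2 + k * b ^ 2 = k * b ^ 2 + a * a by ring, coprime_add_mul_right_right]
  exact hak.mul_right (hab.pow_right 2)

theorem Coprime.coprime_sq_add_mul_sq_right {a b k : ℕ} (hab : a.Coprime b) :
    b.Coprime (a ^ 2 + k * b ^ 2) := by
  rw [show a ^ 2 + k * b ^ 2 = a ^ 2 + k * b * b by ring, coprime_add_mul_right_right]
  exact (hab.pow_left 2).symm

theorem Coprime.coprime_sq_add_mul_sq_sq_add_two_mul_mul_sq {a b k : ℕ} (hab : a.Coprime b)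
    (hak : a.Coprime k) : (a ^ 2 + k * b ^ 2).Coprime (a ^ 2 + 2 * k * b ^ 2) := by
  rw [show a ^ 2 + 2 * k * b ^ 2 = k * b ^ 2 + 1 * (a ^ 2 + k * b ^ 2) by ring,
    coprime_add_mul_right_right]
  refine Coprime.mul_right ?_ (hab.coprime_sq_add_mul_sq_right.symm.pow_right 2)
  rw [coprime_add_mul_left_left]
  exact hak.pow_left 2

theorem not_isSquare_two_pow_mul_sq_add_two_pow_mul_sq {a b : ℕ} (T d : ℕ) (hd : d ≠ 0)
    (ha : Odd a) (hb : Odd b) (hab : a.Coprime b) :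
    ¬IsSquare (2 ^ T * (a * b * (a ^ 2 + 2 ^ d * b ^ 2) * (a ^ 2 + 2 ^ (d + 1) * b ^ 2))) := by
  intro h
  have ha2 : a.Coprime 2 := coprime_two_right.mpr ha
  have hQ₁ : Odd (a ^ 2 + 2 ^ d * b ^ 2) :=
    ha.pow.add_even ((Nat.even_pow.mpr ⟨even_two, hd⟩).mul_right _)
  have hQ₂ : Odd (a ^ 2 + 2 ^ (d + 1) * b ^ 2) :=
    ha.pow.add_even ((Nat.even_pow.mpr ⟨even_two, d.succ_ne_zero⟩).mul_right _)
  rw [_root_.pow_succ' 2 d] at h hQ₂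
  obtain ⟨⟨u, rfl⟩, ⟨σ, rfl⟩, ⟨v, hv⟩, ⟨w, hw⟩⟩ :=
    isSquare_of_isSquare_mul_of_pairwise_coprime hab
      (hab.coprime_sq_add_mul_sq_left (ha2.pow_right d))
      (hab.coprime_sq_add_mul_sq_left (ha2.mul_right (ha2.pow_right d)))
      hab.coprime_sq_add_mul_sq_right hab.coprime_sq_add_mul_sq_right
      (hab.coprime_sq_add_mul_sq_sq_add_two_mul_mul_sq (ha2.pow_right d))
      (isSquare_of_isSquare_two_pow_mul T (((ha.mul hb).mul hQ₁).mul hQ₂) h)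
  have : (σ : ℚ) = 0 := eq_zero_of_pow_four_add_two_pow_mul_pow_four d (a := u) (v := v) (w := w)
    (by exact_mod_cast (by rw [sq v, ← hv]; ring))
    (by exact_mod_cast (by rw [sq w, ← hw]; ring))
  rw [show σ = 0 by exact_mod_cast this] at hb
  simp at hb

theorem not_isSquare_two_pow_mul_sq_add_sq {a b : ℕ} (T : ℕ) (ha : Odd a) (hb : Odd b)
    (hab : a.Coprime b) :
    ¬IsSquare (2 ^ T * (a * b * (a ^ 2 + b ^ 2) * (a ^ 2 + 2 * b ^ 2))) := by
  intro h
  obtain ⟨G, hG, hG_odd⟩ : ∃ G, a ^ 2 + b ^ 2 = 2 * G ∧ Odd G := by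
    obtain ⟨i, rfl⟩ := ha
    obtain ⟨j, rfl⟩ := hb
    exact ⟨2 * (i ^ 2 + i + j ^ 2 + j) + 1, by ring, odd_two_mul_add_one _⟩
  have ha2 : a.Coprime 2 := coprime_two_right.mpr ha
  have haG : a.Coprime G := Coprime.coprime_dvd_right ⟨2, by omega⟩
    (hab.coprime_sq_add_mul_sq_left (k := 1) (coprime_one_right a))
  have hbG : b.Coprime G :=
    Coprime.coprime_dvd_right ⟨2, by omega⟩ (hab.coprime_sq_add_mul_sq_right (k := 1))
  have hGQ : G.Coprime (a ^ 2 + 2 * b ^ 2) := by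
    rw [show a ^ 2 + 2 * b ^ 2 = b ^ 2 + 2 * G by omega, coprime_add_mul_right_right]
    exact hbG.symm.pow_right 2
  rw [hG, show 2 ^ T * (a * b * (2 * G) * (a ^ 2 + 2 * b ^ 2)) =
    2 ^ (T + 1) * (a * b * G * (a ^ 2 + 2 * b ^ 2)) by ring] at h
  obtain ⟨⟨u, rfl⟩, ⟨σ, rfl⟩, ⟨v, hv⟩, ⟨w, hw⟩⟩ :=
    isSquare_of_isSquare_mul_of_pairwise_coprime hab haG (hab.coprime_sq_add_mul_sq_left ha2) hbG
      hab.coprime_sq_add_mul_sq_right hGQ (isSquare_of_isSquare_two_pow_mul (T + 1)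
        (((ha.mul hb).mul hG_odd).mul (ha.pow.add_even (even_two.mul_right _))) h)
  have : (σ : ℚ) = 0 := eq_zero_of_pow_four_add_pow_four_of_pow_four_add_two_mul_pow_four
    (a := u) (v := v) (w := w)
    (by exact_mod_cast (by rw [sq v, ← hv, ← hG]; ring))
    (by exact_mod_cast (by rw [sq w, ← hw]; ring))
  rw [show σ = 0 by exact_mod_cast this] at hb
  simp at hb

theorem not_isSquare_two_pow_mul_two_pow_mul_sq_add_two_pow_mul_sq {a b : ℕ} (x y T : ℕ)
    (ha : Odd a) (hb : Odd b) (hab : a.Coprime b) : ¬IsSquare (2 ^ T *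
      (a * b * (2 ^ x * a ^ 2 + 2 ^ y * b ^ 2) * (2 ^ x * a ^ 2 + 2 ^ (y + 1) * b ^ 2))) := by
  rcases lt_trichotomy x y with hxy | rfl | hxy
  · obtain ⟨d, rfl⟩ := Nat.exists_eq_add_of_lt hxy
    convert not_isSquare_two_pow_mul_sq_add_two_pow_mul_sq (T + 2 * x) (d + 1) d.succ_ne_zero
      ha hb hab using 2
    ring
  · convert not_isSquare_two_pow_mul_sq_add_sq (T + 2 * x) ha hb hab using 2
    ring
  · obtain ⟨d, rfl⟩ := Nat.exists_eq_add_of_lt hxy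
    rcases eq_or_ne d 0 with rfl | hd
    · convert not_isSquare_two_pow_mul_sq_add_sq (T + 2 * y + 1) hb ha hab.symm using 2
      ring
    · convert not_isSquare_two_pow_mul_sq_add_two_pow_mul_sq (T + 2 * y + 1) d hd hb ha hab.symm
        using 2
      ring

theorem not_isSquare_mul_mul_sq_add_two_pow_mul_sq {P S : ℕ} (m : ℕ) (hP : P ≠ 0) (hS : S ≠ 0)
    (hPS : P.Coprime S) :
    ¬IsSquare (P * S * (P ^ 2 + 2 ^ m * S ^ 2) * (P ^ 2 + 2 ^ (m + 1) * S ^ 2)) := by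
  obtain ⟨e, a, ha, rfl⟩ := exists_eq_two_pow_mul_odd hP
  obtain ⟨f, b, hb, rfl⟩ := exists_eq_two_pow_mul_odd hS
  convert not_isSquare_two_pow_mul_two_pow_mul_sq_add_two_pow_mul_sq (2 * e) (m + 2 * f) (e + f)
    ha hb (Coprime.coprime_mul_left (Coprime.coprime_mul_left_right hPS)) using 2
  ring

end Nat

theorem Rat.eq_zero_of_sq_eq_mul_mul_sq_add_two_pow_mul_sq {p s r : ℚ} (m : ℕ)
    (h : r ^ 2 = p * s * (p ^ 2 + 2 ^ m * s ^ 2) * (p ^ 2 + 2 ^ (m + 1) * s ^ 2)) : r = 0 := by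
  rcases eq_or_ne s 0 with rfl | hs
  · simpa using h
  obtain ⟨t, P, S, ht, hPS, hS, rfl, rfl⟩ := Rat.exists_eq_mul_intCast_natCast p s hs
  have hN : IsSquare (P * S * (P ^ 2 + 2 ^ m * S ^ 2) * (P ^ 2 + 2 ^ (m + 1) * S ^ 2) : ℤ) :=
    Rat.isSquare_intCast_iff.mp (isSquare_of_sq_eq_sq_mul (pow_ne_zero 3 ht) (c := r)
      (by push_cast; linear_combination h))
  have hS' : (0 : ℤ) < S := by exact_mod_cast hS
  rcases lt_trichotomy P 0 with hP | rfl | hP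
  · have : P * S * (P ^ 2 + 2 ^ m * S ^ 2) * (P ^ 2 + 2 ^ (m + 1) * S ^ 2) < 0 :=
      mul_neg_of_neg_of_pos (mul_neg_of_neg_of_pos (mul_neg_of_neg_of_pos hP hS') (by positivity))
        (by positivity)
    exact absurd hN.nonneg (not_le.mpr this)
  · simpa using h
  · lift P to ℕ using hP.le
    exact absurd (by exact_mod_cast hN) (Nat.not_isSquare_mul_mul_sq_add_two_pow_mul_sq m
      (by omega) hS.ne' (Nat.isCoprime_iff_coprime.mp hPS))

theorem function_field_points_general (i j : ℕ) (A B C : Polynomial ℚ)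
    (heq : B ^ 2 =
      A * C * (A ^ 2 + Polynomial.C ((2 : ℚ) ^ i) * X ^ j * C ^ 2) *
        (A ^ 2 + Polynomial.C ((2 : ℚ) ^ (i + 1)) * X ^ j * C ^ 2)) :
    B = 0 ∧
      A * C * (A ^ 2 + Polynomial.C ((2 : ℚ) ^ i) * X ^ j * C ^ 2) *
        (A ^ 2 + Polynomial.C ((2 : ℚ) ^ (i + 1)) * X ^ j * C ^ 2) = 0 := by
  have hB : B = 0 := by
    refine eq_zero_of_infinite_isRoot B (Set.infinite_of_injective_forall_mem
      (pow_right_injective₀ two_pos one_lt_two.ne') fun k => ?_)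
    have heval := congrArg (eval ((2 : ℚ) ^ k)) heq
    simp only [eval_mul, eval_add, eval_pow, eval_C, eval_X] at heval
    exact Rat.eq_zero_of_sq_eq_mul_mul_sq_add_two_pow_mul_sq (i + k * j)
      (p := eval (2 ^ k) A) (s := eval (2 ^ k) C) (heval.trans (by ring))
  exact ⟨hB, by simpa [hB] using heq.symm⟩

/-- The only `ℚ(t)`-points of `y² = x(x² + 2ⁱtʲ)(x² + 2^{i+1}tʲ)` are `(0,0)` and `∞`:
if `X, Y, Z ∈ ℚ[t]` have no common non-unit factor and satisfy the weighted homogeneous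
equation `Y² = XZ(X² + 2ⁱtʲZ²)(X² + 2^{i+1}tʲZ²)`, then `Y = 0` and
`XZ(X² + 2ⁱtʲZ²)(X² + 2^{i+1}tʲZ²) = 0`. -/
theorem function_field_points (i j : ℕ) (A B C : Polynomial ℚ)
    (hcop : ∀ d : Polynomial ℚ, d ∣ A → d ∣ B → d ∣ C → IsUnit d)
    (heq : B ^ 2 =
      A * C * (A ^ 2 + Polynomial.C ((2 : ℚ) ^ i) * X ^ j * C ^ 2) *
        (A ^ 2 + Polynomial.C ((2 : ℚ) ^ (i + 1)) * X ^ j * C ^ 2)) :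
    B = 0 ∧
      A * C * (A ^ 2 + Polynomial.C ((2 : ℚ) ^ i) * X ^ j * C ^ 2) *
        (A ^ 2 + Polynomial.C ((2 : ℚ) ^ (i + 1)) * X ^ j * C ^ 2) = 0 :=
  function_field_points_general i j A B C heq
end

section
/- Let p be a prime with p ≠ 3. There are no nonzero integers a, b such that b² = 2⁵·p⁵·a·(a²+1)·(a²+2) with a odd. -/
/-!
Since `a` is odd, `b² = 2⁶ p⁵ · a · B · C` with `B = (a² + 1) / 2` and `C = a² + 2` pairwise
coprime, so `p⁵ a B C` is a square. If `p ∤ C`, then `C = a² + 2` is a square, which is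
impossible mod 4. If `p ∣ C`, then `a = ±c²` and `B = d²`, hence `d⁴ = c⁴ + (d² - 1)²`. By
Fermat's right triangle theorem (proved by descent through primitive Pythagorean triples)
`d² = 1`, so `a² = 1`, `C = 3` and `p = 3`.
-/

theorem sq_add_two_ne_sq (a t : ℤ) : a ^ 2 + 2 ≠ t ^ 2 := by
  intro h
  have h4 := congrArg (Int.cast : ℤ → ZMod 4) h
  push_cast at h4
  generalize (a : ZMod 4) = A at h4
  generalize (t : ZMod 4) = T at h4
  revert A T
  decide

theorem IsCoprime.sq_sub_sq_left {R : Type*} [CommRing R] {r s : R} (h : IsCoprime r s) :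
    IsCoprime r (r ^ 2 - s ^ 2) := by
  convert (h.pow_right (n := 2)).neg_right.add_mul_left_right r using 1
  ring

theorem IsCoprime.sq_sub_sq_right {R : Type*} [CommRing R] {r s : R} (h : IsCoprime r s) :
    IsCoprime s (r ^ 2 - s ^ 2) := by
  simpa using h.symm.sq_sub_sq_left.neg_right

theorem Odd.isCoprime_sq_add_two {a : ℤ} (ha : Odd a) : IsCoprime a (a ^ 2 + 2) := by
  obtain ⟨k, rfl⟩ := ha
  exact ⟨1 + k * (2 * k + 1), -k, by ring⟩

theorem exists_sq_of_isCoprime_of_pos {a b c : ℤ} (ha : 0 < a) (hab : IsCoprime a b)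
    (h : a * b = c ^ 2) : ∃ d, a = d ^ 2 := by
  obtain ⟨d, hd | hd⟩ := Int.sq_of_isCoprime hab h
  · exact ⟨d, hd⟩
  · nlinarith [sq_nonneg d]

theorem exists_sq_of_sq_mul_eq_sq {k m b : ℤ} (hk : k ≠ 0) (h : k ^ 2 * m = b ^ 2) :
    ∃ s, m = s ^ 2 := by
  obtain ⟨s, rfl⟩ := (Int.pow_dvd_pow_iff two_ne_zero).mp ⟨m, h.symm⟩
  exact ⟨s, mul_left_cancel₀ (pow_ne_zero 2 hk) (by rw [h]; ring)⟩

theorem exists_smaller_of_sq_eq_two_mul {u v x y : ℤ} (hu : Odd u) (hu0 : 0 < u) (hv0 : 0 < v)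
    (huv : IsCoprime u v) (hx : x ^ 2 = u ^ 2 + v ^ 2) (hy : y ^ 2 = 2 * u * v) :
    ∃ g h t : ℤ, IsCoprime g h ∧ h ≠ 0 ∧ t ≠ 0 ∧ g ^ 4 = h ^ 4 + t ^ 2 ∧ g ^ 2 < x ^ 2 := by
  have htri : PythagoreanTriple u v |x| := by
    unfold PythagoreanTriple; nlinarith [sq_abs x]
  have hx0 : x ≠ 0 := by rintro rfl; nlinarith
  obtain ⟨r, s, rfl, rfl, hx', hrs, -, hr⟩ := htri.coprime_classification'
    (Int.isCoprime_iff_gcd_eq_one.mp huv) (Int.odd_iff.mp hu) (abs_pos.mpr hx0)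
  have hr0 : 0 < r := lt_of_le_of_ne hr (by rintro rfl; simp at hv0)
  have hs0 : 0 < s := by nlinarith
  have hrs : IsCoprime r s := Int.isCoprime_iff_gcd_eq_one.mpr hrs
  obtain ⟨w, rfl⟩ : 2 ∣ y := by
    rw [← Int.pow_dvd_pow_iff two_ne_zero, hy]
    exact ⟨(r ^ 2 - s ^ 2) * r * s, by ring⟩
  have hw : r * s * (r ^ 2 - s ^ 2) = w ^ 2 := by linarith
  obtain ⟨g, rfl⟩ := exists_sq_of_isCoprime_of_pos hr0 (hrs.mul_right hrs.sq_sub_sq_left)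
    (by rw [← hw]; ring)
  obtain ⟨h, rfl⟩ := exists_sq_of_isCoprime_of_pos hs0
    (hrs.symm.mul_right hrs.sq_sub_sq_right) (by rw [← hw]; ring)
  obtain ⟨t, ht⟩ := exists_sq_of_isCoprime_of_pos hu0
    (hrs.sq_sub_sq_left.symm.mul_right hrs.sq_sub_sq_right.symm) (by rw [← hw]; ring)
  refine ⟨g, h, t, (IsCoprime.pow_iff two_pos two_pos).mp hrs, ?_, ?_, ?_, ?_⟩
  · rintro rfl; simp at hs0
  · rintro rfl; simp [ht] at hu0
  · linear_combination ht
  · nlinarith [abs_nonneg x, sq_abs x]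

theorem exists_smaller_of_pow_four_eq_pow_four_add_sq {x y z : ℤ} (hxy : IsCoprime x y)
    (hy : y ≠ 0) (hz : z ≠ 0) (h : x ^ 4 = y ^ 4 + z ^ 2) :
    ∃ x' y' z' : ℤ, IsCoprime x' y' ∧ y' ≠ 0 ∧ z' ≠ 0 ∧ x' ^ 4 = y' ^ 4 + z' ^ 2 ∧
      x' ^ 2 < x ^ 2 := by
  have hy2 : 0 < y ^ 2 := by positivity
  have hx : x ≠ 0 := by rintro rfl; nlinarith [sq_nonneg z]
  have hyz : IsCoprime (y ^ 2) z := by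
    have := (hxy.symm.pow (m := 2) (n := 4)).add_mul_left_right (-(y ^ 2))
    rw [show x ^ 4 + y ^ 2 * -(y ^ 2) = z ^ 2 by linear_combination h] at this
    exact (IsCoprime.pow_right_iff two_pos).mp this
  have htri : PythagoreanTriple (y ^ 2) z (x ^ 2) := by
    unfold PythagoreanTriple; linear_combination -h
  rcases Int.even_or_odd y with hye | hyo
  · have hzo : Odd z := by
      rw [← Int.not_even_iff_odd]
      intro hze
      exact absurd (hyz.isUnit_of_dvd' (dvd_pow hye.two_dvd two_ne_zero) hze.two_dvd) (by decide)
    obtain ⟨m, n, -, hy', hx', hmn, hpar, hm⟩ := htri.symm.coprime_classification'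
      (Int.isCoprime_iff_gcd_eq_one.mp hyz.symm) (Int.odd_iff.mp hzo) (by positivity)
    have hmn0 : 0 < m * n := by linarith
    have hm0 : 0 < m := lt_of_le_of_ne hm (by rintro rfl; simp at hmn0)
    have hn0 : 0 < n := pos_of_mul_pos_right hmn0 hm
    have hmn := Int.isCoprime_iff_gcd_eq_one.mpr hmn
    rcases hpar with ⟨-, hn⟩ | ⟨hm, -⟩
    · exact exists_smaller_of_sq_eq_two_mul (x := x) (y := y) (Int.odd_iff.mpr hn) hn0 hm0
        hmn.symm (by linear_combination hx') (by linear_combination hy')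
    · exact exists_smaller_of_sq_eq_two_mul (Int.odd_iff.mpr hm) hm0 hn0 hmn hx' hy'
  · obtain ⟨m, n, hy', hz', hx', hmn, -, -⟩ := htri.coprime_classification'
      (Int.isCoprime_iff_gcd_eq_one.mp hyz) (Int.odd_iff.mp hyo.pow) (by positivity)
    have hn : n ≠ 0 := by rintro rfl; simp [hz'] at hz
    refine ⟨m, n, x * y, Int.isCoprime_iff_gcd_eq_one.mpr hmn, hn, mul_ne_zero hx hy, ?_, ?_⟩
    · linear_combination (n ^ 2 - m ^ 2) * hx' - x ^ 2 * hy'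
    · have : 0 < n ^ 2 := by positivity
      linarith

theorem eq_zero_of_pow_four_eq_pow_four_add_sq {x y z : ℤ} (hxy : IsCoprime x y) (hy : y ≠ 0)
    (h : x ^ 4 = y ^ 4 + z ^ 2) : z = 0 := by
  induction hn : x.natAbs using Nat.strong_induction_on generalizing x y z with
  | _ n ih =>
  by_contra hz
  obtain ⟨x', y', z', hxy', hy', hz', h', hlt⟩ :=
    exists_smaller_of_pow_four_eq_pow_four_add_sq hxy hy hz h
  exact hz' (ih _ (hn ▸ Int.natAbs_lt_iff_sq_lt.mpr hlt) hxy' hy' h' rfl)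

theorem pow_four_eq_one_of_pow_four_add_one_eq_two_mul_sq {c d : ℤ}
    (h : c ^ 4 + 1 = 2 * d ^ 2) : c ^ 4 = 1 := by
  have hc : c ≠ 0 := by
    rintro rfl
    exact absurd (⟨d ^ 2, by linear_combination h⟩ : (2 : ℤ) ∣ 1) (by omega)
  have hd := eq_zero_of_pow_four_eq_pow_four_add_sq (x := d) (y := c) (z := d ^ 2 - 1)
    ⟨2 * d, -c ^ 3, by linear_combination -h⟩ hc (by linear_combination -h)
  linear_combination h + 2 * hd

theorem sq_eq_one_of_mul_eq_sq {a B m s : ℤ} (hB : a ^ 2 + 1 = 2 * B)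
    (ha : IsCoprime a (B * m)) (hBm : IsCoprime B (a * m)) (h : a * B * m = s ^ 2) :
    a ^ 2 = 1 := by
  obtain ⟨c, hc⟩ := Int.sq_of_isCoprime ha (by rw [← h]; ring)
  obtain ⟨d, rfl⟩ := exists_sq_of_isCoprime_of_pos (by nlinarith [sq_nonneg a]) hBm
    (by rw [← h]; ring)
  have hac : a ^ 2 = c ^ 4 := by rcases hc with rfl | rfl <;> ring
  rw [hac]
  exact pow_four_eq_one_of_pow_four_add_one_eq_two_mul_sq (d := d) (by linear_combination hB - hac)

/-- For a prime `p ≠ 3`, there are no nonzero integers `a, b` with `a` odd such that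
`b² = 2⁵·p⁵·a·(a²+1)·(a²+2)`. -/
theorem no_solution_p_ne_three (p : ℕ) (hp : p.Prime) (hp3 : p ≠ 3) :
    ¬ ∃ a b : ℤ, a ≠ 0 ∧ b ≠ 0 ∧ Odd a ∧
      b ^ 2 = 2 ^ 5 * (p : ℤ) ^ 5 * a * (a ^ 2 + 1) * (a ^ 2 + 2) := by
  rintro ⟨a, b, -, -, ha, hb⟩
  obtain ⟨B, hB⟩ : 2 ∣ a ^ 2 + 1 := (ha.pow.add_odd odd_one).two_dvd
  obtain ⟨s, hs⟩ := exists_sq_of_sq_mul_eq_sq (k := 8) (b := b)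
    (m := (p : ℤ) ^ 5 * a * B * (a ^ 2 + 2)) (by norm_num)
    (by linear_combination -hb - 32 * (p : ℤ) ^ 5 * a * (a ^ 2 + 2) * hB)
  have haB : IsCoprime a B := ⟨-a, 2, by linear_combination -hB⟩
  have hBC : IsCoprime B (a ^ 2 + 2) := ⟨-2, 1, by linear_combination hB⟩
  have haC := ha.isCoprime_sq_add_two
  by_cases hpC : (p : ℤ) ∣ a ^ 2 + 2
  · have hap := (haC.of_isCoprime_of_dvd_right hpC).pow_right (n := 5)
    have hBp := (hBC.of_isCoprime_of_dvd_right hpC).pow_right (n := 5)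
    have ha2 := sq_eq_one_of_mul_eq_sq (m := (p : ℤ) ^ 5 * (a ^ 2 + 2)) hB
      (haB.mul_right (hap.mul_right haC)) (haB.symm.mul_right (hBp.mul_right hBC))
      (by rw [← hs]; ring)
    rw [ha2] at hpC
    exact hp3 ((Nat.prime_dvd_prime_iff_eq hp Nat.prime_three).mp (by exact_mod_cast hpC))
  · have hCp := (((Nat.prime_iff_prime_int.mp hp).coprime_iff_not_dvd).mpr hpC).symm
    obtain ⟨t, ht | ht⟩ := Int.sq_of_isCoprime
      ((hCp.pow_right (n := 5)).mul_right (haC.symm.mul_right hBC.symm)) (by rw [← hs]; ring)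
    · exact sq_add_two_ne_sq a t ht
    · nlinarith [sq_nonneg a, sq_nonneg t]
end
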